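/- Let F : R^d -> R be L-smooth, mu > 0, and let z_1, ..., z_k be i.i.d. uniform on the unit sphere S^d. Define g(w, z) = d * (F(w + mu*z) - F(w - mu*z))/(2*mu) * z. Then E[ || (1/k) * sum_{r=1}^k g(w, z_r) ||_2^2 ] <= ((k-1)*(1 + sqrt(d)) + 2d)/k * ||grad F(w)||_2^2 + 2 * L^2 * mu^2 * d^2. -/

import Mathlib

open MeasureTheory

abbrev Euc (d : ℕ) := EuclideanSpace ℝ (Fin d)

/-- The uniform (rotation-invariant) probability measure on the unit sphere in `ℝ^d`. -/
noncomputable def uniformSphere (d : ℕ) :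
    Measure (Metric.sphere (0 : Euc d) 1) :=
  ((volume : Measure (Euc d)).toSphere Set.univ)⁻¹ • (volume : Measure (Euc d)).toSphere

instance uniformSphere_finite (d : ℕ) : IsFiniteMeasure (uniformSphere d) := by
  constructor
  rw [uniformSphere, Measure.smul_apply, smul_eq_mul]
  exact lt_of_le_of_lt (ENNReal.inv_mul_le_one _) ENNReal.one_lt_top

/-!
Because the directions are i.i.d., expanding the square of the average leaves `k` diagonal terms
`E‖g(w, z)‖²` and `k (k - 1)` cross terms `‖E g(w, z)‖²`. The uniform measure on the sphere is
invariant under coordinate reflections and transpositions, so `E[zᵢ zⱼ] = δᵢⱼ / d`; hence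
`E⟪v, z⟫² = ‖v‖² / d` and `E[d ⟪v, z⟫ z] = v`. By `L`-smoothness `g(w, z)` is within `L d μ` of
`d ⟪∇F(w), z⟫ z`, which gives `E‖g‖² ≤ 2 d ‖∇F(w)‖² + 2 L² μ² d²` and `‖E g‖ ≤ ‖∇F(w)‖ + L d μ`;
squaring the latter and using `2 ≤ 1 + √d` bounds the cross terms.
-/

open Metric Set ProbabilityTheory
open scoped Pointwise RealInnerProductSpace

theorem MeasureTheory.MemLp.integrable_inner {Ω E : Type*} [MeasurableSpace Ω] {P : Measure Ω}
    [NormedAddCommGroup E] [InnerProductSpace ℝ E] {g h : Ω → E} (hg : MemLp g 2 P)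
    (hh : MemLp h 2 P) : Integrable (fun ω => ⟪g ω, h ω⟫) P :=
  (L2.integrable_inner (𝕜 := ℝ) hg.toLp hh.toLp).congr <| by
    filter_upwards [hg.coeFn_toLp, hh.coeFn_toLp] with ω hgω hhω
    rw [hgω, hhω]

theorem norm_smul_sum_sq {E ι : Type*} [NormedAddCommGroup E] [InnerProductSpace ℝ E] (c : ℝ)
    (t : Finset ι) (v : ι → E) :
    ‖c • ∑ r ∈ t, v r‖ ^ 2 = c ^ 2 * ∑ r ∈ t, ∑ s ∈ t, ⟪v r, v s⟫ := by
  rw [norm_smul, mul_pow, Real.norm_eq_abs, sq_abs, ← real_inner_self_eq_norm_sq, sum_inner]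
  simp_rw [inner_sum]

theorem Continuous.integrable_of_compactSpace {X G : Type*} [TopologicalSpace X] [CompactSpace X]
    [MeasurableSpace X] [OpensMeasurableSpace X] [NormedAddCommGroup G] {μ : Measure X}
    [IsFiniteMeasure μ] {g : X → G} (hg : Continuous g) : Integrable g μ :=
  hg.integrable_of_hasCompactSupport (HasCompactSupport.of_compactSpace g)

section SampleMean

variable {X : Type*} [MeasurableSpace X] {ν : Measure X} [IsProbabilityMeasure ν] {k : ℕ}

theorem integral_comp_eval_pi {G : Type*} [NormedAddCommGroup G] [NormedSpace ℝ G] {g : X → G}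
    (hg : AEStronglyMeasurable g ν) (r : Fin k) :
    ∫ z, g (z r) ∂(Measure.pi fun _ => ν) = ∫ x, g x ∂ν := by
  have h := measurePreserving_eval (fun _ : Fin k => ν) r
  have hmap := integral_map h.measurable.aemeasurable (by rwa [h.map_eq])
  rw [h.map_eq] at hmap
  exact hmap.symm

variable {E : Type*} [NormedAddCommGroup E] [InnerProductSpace ℝ E] [CompleteSpace E] {f : X → E}

theorem integral_inner_eval_pi_of_ne (hf : Integrable f ν) {r s : Fin k} (hrs : r ≠ s) :
    ∫ z, ⟪f (z r), f (z s)⟫ ∂(Measure.pi fun _ => ν) = ‖∫ x, f x ∂ν‖ ^ 2 := by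
  have hindep : IndepFun (fun z : Fin k → X => z r) (fun z => z s) (Measure.pi fun _ => ν) :=
    (iIndepFun_pi (X := fun _ => id) fun _ => aemeasurable_id).indepFun hrs
  have hpair : AEMeasurable (fun z : Fin k → X => (z r, z s)) (Measure.pi fun _ => ν) :=
    ((measurable_pi_apply r).prodMk (measurable_pi_apply s)).aemeasurable
  have hmap : (Measure.pi fun _ => ν).map (fun z : Fin k → X => (z r, z s)) = ν.prod ν := by
    rw [(indepFun_iff_map_prod_eq_prod_map_map (measurable_pi_apply r).aemeasurable
      (measurable_pi_apply s).aemeasurable).mp hindep,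
      (measurePreserving_eval _ r).map_eq, (measurePreserving_eval _ s).map_eq]
  have hprod : Integrable (fun p : X × X => ⟪f p.1, f p.2⟫) (ν.prod ν) :=
    hf.op_fst_snd (op := fun x y => ⟪x, y⟫) continuous_inner
      ⟨1, fun x y => by simpa using abs_real_inner_le_norm x y⟩ hf
  rw [← integral_map (f := fun p : X × X => ⟪f p.1, f p.2⟫) hpair (hmap ▸ hprod.1), hmap,
    integral_prod _ hprod]
  simp_rw [integral_inner hf]
  rw [← real_inner_self_eq_norm_sq, ← integral_inner hf]
  simp_rw [real_inner_comm _ (∫ x, f x ∂ν)]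

theorem integral_inner_eval_pi (hf : MemLp f 2 ν) (r s : Fin k) :
    ∫ z, ⟪f (z r), f (z s)⟫ ∂(Measure.pi fun _ => ν) =
      if r = s then ∫ x, ‖f x‖ ^ 2 ∂ν else ‖∫ x, f x ∂ν‖ ^ 2 := by
  split_ifs with hrs
  · simp_rw [hrs, real_inner_self_eq_norm_sq]
    exact integral_comp_eval_pi (hf.1.norm.pow 2) s
  · exact integral_inner_eval_pi_of_ne (hf.integrable one_le_two) hrs

theorem integral_norm_sq_smul_sum_pi (hk : 0 < k) (hf : MemLp f 2 ν) :
    ∫ z, ‖(k : ℝ)⁻¹ • ∑ r, f (z r)‖ ^ 2 ∂(Measure.pi fun _ : Fin k => ν) =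
      (∫ x, ‖f x‖ ^ 2 ∂ν + (k - 1) * ‖∫ x, f x ∂ν‖ ^ 2) / k := by
  have hint (r s : Fin k) : Integrable (fun z => ⟪f (z r), f (z s)⟫) (Measure.pi fun _ => ν) :=
    (hf.comp_measurePreserving (measurePreserving_eval _ r)).integrable_inner
      (hf.comp_measurePreserving (measurePreserving_eval _ s))
  simp_rw [norm_smul_sum_sq]
  rw [integral_const_mul,
    integral_finsetSum _ fun r _ => integrable_finsetSum _ fun s _ => hint r s]
  simp_rw [integral_finsetSum _ fun s _ => hint _ s, integral_inner_eval_pi hf]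
  simp [Finset.sum_ite, Finset.filter_eq, ← ne_eq, Finset.filter_ne, Nat.cast_sub hk]
  field_simp

end SampleMean

namespace LinearIsometryEquiv

variable {E : Type*} [NormedAddCommGroup E] [NormedSpace ℝ E]

def restrictSphere (e : E ≃ₗᵢ[ℝ] E) : sphere (0 : E) 1 → sphere (0 : E) 1 :=
  fun z => ⟨e z, by simp⟩

@[simp]
theorem coe_restrictSphere (e : E ≃ₗᵢ[ℝ] E) (z : sphere (0 : E) 1) :
    (e.restrictSphere z : E) = e z :=
  rfl

theorem continuous_restrictSphere (e : E ≃ₗᵢ[ℝ] E) : Continuous e.restrictSphere :=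
  (e.continuous.comp continuous_subtype_val).subtype_mk _

theorem injective_restrictSphere (e : E ≃ₗᵢ[ℝ] E) : Function.Injective e.restrictSphere :=
  fun _ _ h => Subtype.ext (e.injective (congrArg Subtype.val h))

theorem image_val_preimage_restrictSphere (e : E ≃ₗᵢ[ℝ] E) (s : Set (sphere (0 : E) 1)) :
    (↑) '' (e.restrictSphere ⁻¹' s) = e ⁻¹' ((↑) '' s) := by
  ext x
  constructor
  · rintro ⟨z, hz, rfl⟩
    exact ⟨_, hz, rfl⟩
  · rintro ⟨z, hz, hzx⟩
    have hx : x ∈ sphere (0 : E) 1 := by simpa [hzx] using z.2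
    have hzx' : e.restrictSphere ⟨x, hx⟩ = z := Subtype.ext hzx.symm
    exact ⟨⟨x, hx⟩, by rwa [Set.mem_preimage, hzx'], rfl⟩

theorem smul_preimage (e : E ≃ₗᵢ[ℝ] E) (t : Set ℝ) (B : Set E) :
    t • (e ⁻¹' B) = e ⁻¹' (t • B) := by
  ext x
  simp only [Set.mem_smul, Set.mem_preimage]
  constructor
  · rintro ⟨c, hc, y, hy, rfl⟩
    exact ⟨c, hc, e y, hy, (_root_.map_smul e c y).symm⟩
  · rintro ⟨c, hc, b, hb, hcb⟩
    exact ⟨c, hc, e.symm b, by simpa using hb, e.injective (by simp [hcb])⟩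

variable [MeasurableSpace E] [BorelSpace E]

theorem measurePreserving_restrictSphere (e : E ≃ₗᵢ[ℝ] E) {μ : Measure E}
    (he : MeasurePreserving e μ μ) :
    MeasurePreserving e.restrictSphere μ.toSphere μ.toSphere := by
  refine ⟨e.continuous_restrictSphere.measurable, ?_⟩
  ext s hs
  rw [Measure.map_apply e.continuous_restrictSphere.measurable hs,
    Measure.toSphere_apply' _ (hs.preimage e.continuous_restrictSphere.measurable),
    Measure.toSphere_apply' _ hs, image_val_preimage_restrictSphere, smul_preimage]
  congr 1
  exact he.measure_preimage_equiv (f := e.toHomeomorph.toMeasurableEquiv) _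

end LinearIsometryEquiv

section UniformSphere

variable {d : ℕ}

theorem isProbabilityMeasure_uniformSphere (hd : 0 < d) :
    IsProbabilityMeasure (uniformSphere d) := by
  have : Nonempty (Fin d) := ⟨⟨0, hd⟩⟩
  have : NeZero (volume : Measure (Euc d)).toSphere := ⟨Measure.toSphere_ne_zero _⟩
  exact isProbabilityMeasureSMul

theorem integral_comp_restrictSphere {G : Type*} [NormedAddCommGroup G] [NormedSpace ℝ G]
    (e : Euc d ≃ₗᵢ[ℝ] Euc d) (g : sphere (0 : Euc d) 1 → G) :
    ∫ z, g (e.restrictSphere z) ∂uniformSphere d = ∫ z, g z ∂uniformSphere d := by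
  have h := e.measurePreserving_restrictSphere e.measurePreserving
  refine MeasurePreserving.integral_comp ⟨h.measurable, ?_⟩
    (e.continuous_restrictSphere.isClosedEmbedding e.injective_restrictSphere).measurableEmbedding g
  rw [uniformSphere, Measure.map_smul, h.map_eq]

noncomputable def coordReflection (j : Fin d) : Euc d ≃ₗᵢ[ℝ] Euc d :=
  LinearIsometryEquiv.piLpCongrRight 2
    fun i => if i = j then LinearIsometryEquiv.neg ℝ else LinearIsometryEquiv.refl ℝ ℝ

theorem coordReflection_apply (j : Fin d) (x : Euc d) (i : Fin d) :
    coordReflection j x i = if i = j then -x i else x i := by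
  rw [coordReflection, LinearIsometryEquiv.piLpCongrRight_apply]
  split_ifs with h <;> simp [h]

noncomputable def coordSwap (i j : Fin d) : Euc d ≃ₗᵢ[ℝ] Euc d :=
  LinearIsometryEquiv.piLpCongrLeft 2 ℝ ℝ (Equiv.swap i j)

theorem coordSwap_apply (i j : Fin d) (x : Euc d) (m : Fin d) :
    coordSwap i j x m = x (Equiv.swap i j m) := by
  rw [coordSwap, LinearIsometryEquiv.piLpCongrLeft_apply]
  rfl

theorem integral_coord_mul_coord_of_ne {i j : Fin d} (hij : i ≠ j) :
    ∫ z : sphere (0 : Euc d) 1, (z : Euc d) i * (z : Euc d) j ∂uniformSphere d = 0 := by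
  have h := integral_comp_restrictSphere (coordReflection j)
    fun z : sphere (0 : Euc d) 1 => (z : Euc d) i * (z : Euc d) j
  simp only [LinearIsometryEquiv.coe_restrictSphere, coordReflection_apply, if_neg hij,
    ↓reduceIte, mul_neg, integral_neg] at h
  linarith

theorem integral_coord_sq_eq (i j : Fin d) :
    ∫ z : sphere (0 : Euc d) 1, (z : Euc d) i ^ 2 ∂uniformSphere d =
      ∫ z : sphere (0 : Euc d) 1, (z : Euc d) j ^ 2 ∂uniformSphere d := by
  have h := integral_comp_restrictSphere (coordSwap i j)
    fun z : sphere (0 : Euc d) 1 => (z : Euc d) i ^ 2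
  simp only [LinearIsometryEquiv.coe_restrictSphere, coordSwap_apply, Equiv.swap_apply_left] at h
  exact h.symm

theorem integral_coord_sq (hd : 0 < d) (i : Fin d) :
    ∫ z : sphere (0 : Euc d) 1, (z : Euc d) i ^ 2 ∂uniformSphere d = (d : ℝ)⁻¹ := by
  have := isProbabilityMeasure_uniformSphere hd
  have hsum :
      ∑ j : Fin d, ∫ z : sphere (0 : Euc d) 1, (z : Euc d) j ^ 2 ∂uniformSphere d = 1 := by
    rw [← integral_finsetSum _ fun j _ =>
      Continuous.integrable_of_compactSpace (by fun_prop)]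
    simp [← EuclideanSpace.real_norm_sq_eq]
  simp_rw [integral_coord_sq_eq _ i, Finset.sum_const, Finset.card_univ, Fintype.card_fin,
    nsmul_eq_mul] at hsum
  exact eq_inv_of_mul_eq_one_right hsum

theorem integral_coord_mul_coord (hd : 0 < d) (i j : Fin d) :
    ∫ z : sphere (0 : Euc d) 1, (z : Euc d) i * (z : Euc d) j ∂uniformSphere d =
      if i = j then (d : ℝ)⁻¹ else 0 := by
  split_ifs with hij
  · simp_rw [hij, ← sq]
    exact integral_coord_sq hd j
  · exact integral_coord_mul_coord_of_ne hij

theorem integral_inner_mul_inner (hd : 0 < d) (u v : Euc d) :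
    ∫ z : sphere (0 : Euc d) 1, ⟪u, z⟫ * ⟪v, z⟫ ∂uniformSphere d = ⟪u, v⟫ / d := by
  have hexpand (z : Euc d) : ⟪u, z⟫ * ⟪v, z⟫ = ∑ i, ∑ j, (u i * v j) * (z i * z j) := by
    simp only [PiLp.inner_apply, RCLike.inner_apply, conj_trivial, Finset.sum_mul_sum]
    exact Finset.sum_congr rfl fun i _ => Finset.sum_congr rfl fun j _ => by ring
  have hcont (i j : Fin d) :
      Continuous fun z : sphere (0 : Euc d) 1 => (z : Euc d) i * (z : Euc d) j := by
    fun_prop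
  simp_rw [hexpand]
  rw [integral_finsetSum _ fun i _ => integrable_finsetSum _ fun j _ =>
    ((hcont i j).const_mul _).integrable_of_compactSpace]
  simp_rw [integral_finsetSum _ fun j _ => ((hcont _ j).const_mul _).integrable_of_compactSpace,
    integral_const_mul, integral_coord_mul_coord hd]
  simp [PiLp.inner_apply, div_eq_inv_mul, Finset.mul_sum, mul_comm]

theorem integral_inner_sq (hd : 0 < d) (v : Euc d) :
    ∫ z : sphere (0 : Euc d) 1, ⟪v, z⟫ ^ 2 ∂uniformSphere d = ‖v‖ ^ 2 / d := by
  simpa [← sq, real_inner_self_eq_norm_sq] using integral_inner_mul_inner hd v v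

theorem integral_inner_smul (hd : 0 < d) (v : Euc d) :
    ∫ z : sphere (0 : Euc d) 1, ⟪v, z⟫ • (z : Euc d) ∂uniformSphere d = (d : ℝ)⁻¹ • v := by
  refine ext_inner_left ℝ fun u => ?_
  have hint :
      Integrable (fun z : sphere (0 : Euc d) 1 => ⟪v, z⟫ • (z : Euc d)) (uniformSphere d) :=
    Continuous.integrable_of_compactSpace (by fun_prop)
  rw [← integral_inner hint]
  simp_rw [real_inner_smul_right, integral_inner_mul_inner hd v u, real_inner_comm v u]
  ring

theorem integral_natCast_mul_inner_smul (hd : 0 < d) (G : Euc d) :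
    ∫ z : sphere (0 : Euc d) 1, ((d : ℝ) * ⟪G, z⟫) • (z : Euc d) ∂uniformSphere d = G := by
  simp_rw [mul_smul]
  rw [integral_smul, integral_inner_smul hd, smul_inv_smul₀ (by positivity)]

end UniformSphere

section Smooth

variable {E : Type*} [NormedAddCommGroup E] [InnerProductSpace ℝ E] [CompleteSpace E]
  {F : E → ℝ} {L : ℝ}

theorem abs_sub_sub_inner_gradient_le (hL : 0 ≤ L) (hF : Differentiable ℝ F)
    (hsmooth : ∀ x y, ‖gradient F x - gradient F y‖ ≤ L * ‖x - y‖) (x v : E) :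
    |F (x + v) - F x - ⟪gradient F x, v⟫| ≤ L * ‖v‖ ^ 2 := by
  have hfderiv (y : E) : fderiv ℝ F y = InnerProductSpace.toDual ℝ E (gradient F y) := by
    rw [gradient, LinearIsometryEquiv.apply_symm_apply]
  have h := Convex.norm_image_sub_le_of_norm_fderiv_le' (𝕜 := ℝ) (f := F)
    (φ := fderiv ℝ F x) (C := L * ‖v‖) (fun y _ => hF y)
    (fun y hy => by
      rw [hfderiv, hfderiv, ← map_sub, LinearIsometryEquiv.norm_map]
      exact (hsmooth y x).trans (mul_le_mul_of_nonneg_left (mem_closedBall_iff_norm.mp hy) hL))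
    (convex_closedBall x ‖v‖) (mem_closedBall_self (norm_nonneg v))
    (by simp : x + v ∈ closedBall x ‖v‖)
  rw [add_sub_cancel_left, hfderiv, InnerProductSpace.toDual_apply_apply, Real.norm_eq_abs] at h
  exact h.trans_eq (by ring)

theorem abs_centralDiff_sub_inner_gradient_le (hL : 0 ≤ L) (hF : Differentiable ℝ F)
    (hsmooth : ∀ x y, ‖gradient F x - gradient F y‖ ≤ L * ‖x - y‖) {μ : ℝ} (hμ : 0 < μ)
    (w z : E) :
    |(F (w + μ • z) - F (w - μ • z)) / (2 * μ) - ⟪gradient F w, z⟫| ≤ L * μ * ‖z‖ ^ 2 := by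
  have hplus := abs_sub_sub_inner_gradient_le hL hF hsmooth w (μ • z)
  have hminus := abs_sub_sub_inner_gradient_le hL hF hsmooth w (-(μ • z))
  rw [norm_smul, Real.norm_of_nonneg hμ.le] at hplus
  rw [norm_neg, norm_smul, Real.norm_of_nonneg hμ.le, ← sub_eq_add_neg, inner_neg_right] at hminus
  rw [real_inner_smul_right] at hplus hminus
  have hsplit : (F (w + μ • z) - F (w - μ • z)) / (2 * μ) - ⟪gradient F w, z⟫ =
      ((F (w + μ • z) - F w - μ * ⟪gradient F w, z⟫) -
        (F (w - μ • z) - F w - -(μ * ⟪gradient F w, z⟫))) / (2 * μ) := by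
    field_simp
    ring
  rw [hsplit, abs_div, abs_of_pos (by positivity : 0 < 2 * μ), div_le_iff₀ (by positivity)]
  calc _ ≤ _ := abs_sub _ _
    _ ≤ L * (μ * ‖z‖) ^ 2 + L * (μ * ‖z‖) ^ 2 := add_le_add hplus hminus
    _ = L * μ * ‖z‖ ^ 2 * (2 * μ) := by ring

end Smooth

section TwoPointEstimator

variable {d : ℕ} {F : Euc d → ℝ} {L μ : ℝ} {w : Euc d}

/-- The estimator `g(w, z)` of the paper. -/
noncomputable def twoPointGrad (d : ℕ) (F : Euc d → ℝ) (μ : ℝ) (w z : Euc d) : Euc d :=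
  ((d : ℝ) * (F (w + μ • z) - F (w - μ • z)) / (2 * μ)) • z

theorem continuous_twoPointGrad_sphere (hF : Continuous F) :
    Continuous fun z : sphere (0 : Euc d) 1 => twoPointGrad d F μ w z := by
  unfold twoPointGrad
  fun_prop

theorem norm_twoPointGrad_sub_le (hμ : 0 < μ) (hL : 0 ≤ L) (hF : Differentiable ℝ F)
    (hsmooth : ∀ x y, ‖gradient F x - gradient F y‖ ≤ L * ‖x - y‖)
    {z : Euc d} (hz : ‖z‖ = 1) :
    ‖twoPointGrad d F μ w z - ((d : ℝ) * ⟪gradient F w, z⟫) • z‖ ≤ L * d * μ := by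
  have h := abs_centralDiff_sub_inner_gradient_le hL hF hsmooth hμ w z
  rw [hz, one_pow, mul_one] at h
  rw [twoPointGrad, ← sub_smul, norm_smul, hz, mul_one, Real.norm_eq_abs, mul_div_assoc,
    ← mul_sub, abs_mul, Nat.abs_cast, mul_comm L, mul_assoc]
  gcongr

theorem integral_norm_twoPointGrad_sq_le (hμ : 0 < μ) (hL : 0 ≤ L) (hF : Differentiable ℝ F)
    (hsmooth : ∀ x y, ‖gradient F x - gradient F y‖ ≤ L * ‖x - y‖)
    (hd : 0 < d) :
    ∫ z : sphere (0 : Euc d) 1, ‖twoPointGrad d F μ w z‖ ^ 2 ∂uniformSphere d ≤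
      2 * d * ‖gradient F w‖ ^ 2 + 2 * L ^ 2 * μ ^ 2 * d ^ 2 := by
  have := isProbabilityMeasure_uniformSphere hd
  have hpointwise (z : sphere (0 : Euc d) 1) : ‖twoPointGrad d F μ w z‖ ^ 2 ≤
      2 * d ^ 2 * ⟪gradient F w, z⟫ ^ 2 + 2 * (L * d * μ) ^ 2 := by
    have herr := norm_twoPointGrad_sub_le hμ hL hF hsmooth (w := w) (norm_eq_of_mem_sphere z)
    have hmain : ‖((d : ℝ) * ⟪gradient F w, z⟫) • (z : Euc d)‖ = d * |⟪gradient F w, z⟫| := by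
      rw [norm_smul, norm_eq_of_mem_sphere z, mul_one, Real.norm_eq_abs, abs_mul, Nat.abs_cast]
    have htri := norm_le_insert' (twoPointGrad d F μ w z)
      (((d : ℝ) * ⟪gradient F w, z⟫) • (z : Euc d))
    rw [hmain] at htri
    nlinarith [sq_abs ⟪gradient F w, (z : Euc d)⟫, norm_nonneg (twoPointGrad d F μ w z),
      sq_nonneg ((d : ℝ) * |⟪gradient F w, (z : Euc d)⟫| - L * d * μ)]
  have hquad : Continuous fun z : sphere (0 : Euc d) 1 => ⟪gradient F w, (z : Euc d)⟫ ^ 2 := by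
    fun_prop
  calc _ ≤ ∫ z : sphere (0 : Euc d) 1,
        2 * d ^ 2 * ⟪gradient F w, z⟫ ^ 2 + 2 * (L * d * μ) ^ 2 ∂uniformSphere d :=
        integral_mono
          ((continuous_twoPointGrad_sphere hF.continuous).norm.pow 2).integrable_of_compactSpace
          ((hquad.const_mul _).add continuous_const).integrable_of_compactSpace hpointwise
    _ = 2 * d ^ 2 * (‖gradient F w‖ ^ 2 / d) + 2 * (L * d * μ) ^ 2 := by
        rw [integral_add (hquad.const_mul _).integrable_of_compactSpace (integrable_const _),
          integral_const_mul, integral_inner_sq hd, integral_const, probReal_univ, one_smul]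
    _ = 2 * d * ‖gradient F w‖ ^ 2 + 2 * L ^ 2 * μ ^ 2 * d ^ 2 := by
        field_simp

theorem norm_integral_twoPointGrad_sub_le (hμ : 0 < μ) (hL : 0 ≤ L) (hF : Differentiable ℝ F)
    (hsmooth : ∀ x y, ‖gradient F x - gradient F y‖ ≤ L * ‖x - y‖)
    (hd : 0 < d) :
    ‖∫ z : sphere (0 : Euc d) 1, twoPointGrad d F μ w z ∂uniformSphere d - gradient F w‖ ≤
      L * d * μ := by
  have := isProbabilityMeasure_uniformSphere hd
  have hlin : Continuous fun z : sphere (0 : Euc d) 1 =>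
      ((d : ℝ) * ⟪gradient F w, (z : Euc d)⟫) • (z : Euc d) := by
    fun_prop
  conv_lhs => rw [← integral_natCast_mul_inner_smul hd (gradient F w),
    ← integral_sub (continuous_twoPointGrad_sphere hF.continuous).integrable_of_compactSpace
      hlin.integrable_of_compactSpace]
  refine (norm_integral_le_of_norm_le_const (Filter.Eventually.of_forall fun z => ?_)).trans_eq
    (by rw [probReal_univ, mul_one])
  exact norm_twoPointGrad_sub_le hμ hL hF hsmooth (norm_eq_of_mem_sphere z)

theorem norm_integral_twoPointGrad_sq_le (hμ : 0 < μ) (hL : 0 ≤ L) (hF : Differentiable ℝ F)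
    (hsmooth : ∀ x y, ‖gradient F x - gradient F y‖ ≤ L * ‖x - y‖)
    (hd : 0 < d) :
    ‖∫ z : sphere (0 : Euc d) 1, twoPointGrad d F μ w z ∂uniformSphere d‖ ^ 2 ≤
      (1 + √d) * ‖gradient F w‖ ^ 2 + 2 * L ^ 2 * μ ^ 2 * d ^ 2 := by
  have hmean := norm_integral_twoPointGrad_sub_le hμ hL hF hsmooth (w := w) hd
  have htri := norm_le_insert'
    (∫ z : sphere (0 : Euc d) 1, twoPointGrad d F μ w z ∂uniformSphere d) (gradient F w)
  have hsqrt : 1 ≤ √(d : ℝ) := Real.one_le_sqrt.mpr (by exact_mod_cast hd)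
  nlinarith [norm_nonneg (∫ z : sphere (0 : Euc d) 1, twoPointGrad d F μ w z ∂uniformSphere d),
    sq_nonneg (‖gradient F w‖ - L * d * μ), sq_nonneg (‖gradient F w‖)]

end TwoPointEstimator

/-- Second moment of the averaged zero-order estimate with `μ > 0` over `k` i.i.d. directions:
`E‖(1/k) ∑ᵣ g(w,zᵣ)‖² ≤ ((k-1)(1+√d) + 2d)/k · ‖∇F(w)‖² + 2L²μ²d²`. -/
theorem stmt14 (d k : ℕ) (hd : 0 < d) (hk : 0 < k) (F : Euc d → ℝ) (L μ : ℝ)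
    (hμ : 0 < μ) (hL : 0 < L) (hF : Differentiable ℝ F)
    (hsmooth : ∀ x y : Euc d, ‖gradient F x - gradient F y‖ ≤ L * ‖x - y‖) (w : Euc d) :
    ∫ z : Fin k → Metric.sphere (0 : Euc d) 1,
        ‖(k : ℝ)⁻¹ • ∑ r : Fin k,
            ((d : ℝ) * (F (w + μ • (z r : Euc d)) - F (w - μ • (z r : Euc d))) / (2 * μ)) •
              (z r : Euc d)‖ ^ 2
        ∂(Measure.pi fun _ : Fin k => uniformSphere d)
      ≤ (((k : ℝ) - 1) * (1 + Real.sqrt d) + 2 * d) / k * ‖gradient F w‖ ^ 2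
        + 2 * L ^ 2 * μ ^ 2 * (d : ℝ) ^ 2 := by
  have := isProbabilityMeasure_uniformSphere hd
  have hg := continuous_twoPointGrad_sphere hF.continuous (μ := μ) (w := w)
  have hk1 : (0 : ℝ) ≤ k - 1 := by
    rw [sub_nonneg]
    exact_mod_cast hk
  calc _ = (∫ z, ‖twoPointGrad d F μ w z‖ ^ 2 ∂uniformSphere d +
        (k - 1) * ‖∫ z, twoPointGrad d F μ w z ∂uniformSphere d‖ ^ 2) / k :=
        integral_norm_sq_smul_sum_pi hk (ContinuousMap.memLp _ ℝ ⟨_, hg⟩)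
    _ ≤ (2 * d * ‖gradient F w‖ ^ 2 + 2 * L ^ 2 * μ ^ 2 * d ^ 2 +
        (k - 1) * ((1 + √d) * ‖gradient F w‖ ^ 2 + 2 * L ^ 2 * μ ^ 2 * d ^ 2)) / k := by
        gcongr
        · exact integral_norm_twoPointGrad_sq_le hμ hL.le hF hsmooth hd
        · exact norm_integral_twoPointGrad_sq_le hμ hL.le hF hsmooth hd
    _ = _ := by
        field_simp
        ring
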